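/- arXiv:2407.02609 — 4 statements merged into one kernel-verified Lean document; each statement's English description precedes it below -/
import Mathlib

section
/- For every α ∈ (0,1) there is a constant c = c(α) such that for all v, w ∈ ℝ: 𝔟_α[v,w] ≤ c·|v - w|^{1+α}. -/
/-!
The Bregman remainder `𝔟_α[v,w] = F w - F v - F' v * (w - v)` is the first-order Taylor remainder
of `F t = |t|^(α+1)/(α+1)`, whose derivative is the signed power `|t|^(α-1) t`. Subadditivity of
`t ↦ t^α` on `[0, ∞)` makes the signed power `α`-Hölder with constant `2`, so the derivative of
`t ↦ F t - F' v * t` is at most `2 |w - v|^α` on the segment between `v` and `w`, and the mean value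
inequality gives `𝔟_α[v,w] ≤ 2 |v - w|^(1+α)`.
-/

open Real Set
open scoped NNReal

lemma HolderWith.of_dist_le {X Y : Type*} [PseudoMetricSpace X] [PseudoMetricSpace Y]
    {C r : ℝ≥0} {f : X → Y} (h : ∀ x y, dist (f x) (f y) ≤ C * dist x y ^ (r : ℝ)) :
    HolderWith C r f := by
  intro x y
  rw [edist_dist, edist_dist, ENNReal.ofReal_rpow_of_nonneg dist_nonneg r.coe_nonneg,
    ← ENNReal.ofReal_coe_nnreal, ← ENNReal.ofReal_mul C.coe_nonneg]
  exact ENNReal.ofReal_le_ofReal (h x y)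

lemma rpow_sub_rpow_le_rpow_sub {p a b : ℝ} (hp0 : 0 ≤ p) (hp1 : p ≤ 1) (hb : 0 ≤ b)
    (hba : b ≤ a) : a ^ p - b ^ p ≤ (a - b) ^ p := by
  have h := rpow_add_le_add_rpow (sub_nonneg.2 hba) hb hp0 hp1
  rw [sub_add_cancel] at h
  linarith

lemma abs_sub_sub_mul_le_of_hasDerivAt_of_holderWith {F f : ℝ → ℝ} {C r : ℝ≥0}
    (hF : ∀ x, HasDerivAt F (f x) x) (hf : HolderWith C r f) (v w : ℝ) :
    |F w - F v - f v * (w - v)| ≤ C * |w - v| ^ (1 + (r : ℝ)) := by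
  have hG : ∀ t ∈ uIcc v w,
      HasDerivWithinAt (fun t => F t - f v * t) (f t - f v) (uIcc v w) t := fun t _ =>
    ((hF t).sub ((hasDerivAt_id' t).const_mul (f v))).hasDerivWithinAt.congr_deriv (by ring)
  have hG' : ∀ t ∈ uIcc v w, ‖f t - f v‖ ≤ C * |w - v| ^ (r : ℝ) := fun t ht => by
    have h := hf.dist_le t v
    rw [Real.dist_eq, Real.dist_eq] at h
    rw [Real.norm_eq_abs]
    exact h.trans <| mul_le_mul_of_nonneg_left
      (rpow_le_rpow (abs_nonneg _) (abs_sub_left_of_mem_uIcc ht) r.coe_nonneg) C.coe_nonneg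
  have h := (convex_uIcc v w).norm_image_sub_le_of_norm_hasDerivWithin_le hG hG'
    left_mem_uIcc right_mem_uIcc
  rw [Real.norm_eq_abs, Real.norm_eq_abs] at h
  rw [rpow_one_add' (abs_nonneg _) (by positivity)]
  convert h using 1 <;> ring_nf

noncomputable def signedRpow (p x : ℝ) : ℝ := |x| ^ (p - 1) * x

section signedRpow

variable {p : ℝ}

lemma signedRpow_neg (p x : ℝ) : signedRpow p (-x) = -signedRpow p x := by
  simp only [signedRpow, abs_neg, mul_neg]

lemma signedRpow_of_nonneg (hp : p ≠ 0) {x : ℝ} (hx : 0 ≤ x) : signedRpow p x = x ^ p := by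
  rcases hx.eq_or_lt with rfl | hx
  · simp [signedRpow, Real.zero_rpow hp]
  · rw [signedRpow, abs_of_pos hx, ← rpow_add_one hx.ne', sub_add_cancel]

lemma signedRpow_of_nonpos (hp : p ≠ 0) {x : ℝ} (hx : x ≤ 0) : signedRpow p x = -(-x) ^ p := by
  rw [← signedRpow_of_nonneg hp (neg_nonneg.2 hx), signedRpow_neg, neg_neg]

lemma monotone_signedRpow (hp : 0 < p) : Monotone (signedRpow p) := by
  intro a b hab
  rcases le_total 0 a with ha | ha
  · rw [signedRpow_of_nonneg hp.ne' ha, signedRpow_of_nonneg hp.ne' (ha.trans hab)]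
    exact rpow_le_rpow ha hab hp.le
  rcases le_total b 0 with hb | hb
  · rw [signedRpow_of_nonpos hp.ne' ha, signedRpow_of_nonpos hp.ne' hb, neg_le_neg_iff]
    exact rpow_le_rpow (neg_nonneg.2 hb) (neg_le_neg hab) hp.le
  · rw [signedRpow_of_nonpos hp.ne' ha, signedRpow_of_nonneg hp.ne' hb]
    linarith [rpow_nonneg (neg_nonneg.2 ha) p, rpow_nonneg hb p]

lemma signedRpow_sub_signedRpow_le (hp0 : 0 < p) (hp1 : p ≤ 1) {a b : ℝ} (hba : b ≤ a) :
    signedRpow p a - signedRpow p b ≤ 2 * (a - b) ^ p := by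
  have hab : 0 ≤ (a - b) ^ p := rpow_nonneg (sub_nonneg.2 hba) p
  rcases le_total 0 b with hb | hb
  · rw [signedRpow_of_nonneg hp0.ne' hb, signedRpow_of_nonneg hp0.ne' (hb.trans hba)]
    linarith [rpow_sub_rpow_le_rpow_sub hp0.le hp1 hb hba]
  rcases le_total a 0 with ha | ha
  · rw [signedRpow_of_nonpos hp0.ne' ha, signedRpow_of_nonpos hp0.ne' hb]
    have h := rpow_sub_rpow_le_rpow_sub hp0.le hp1 (neg_nonneg.2 ha) (neg_le_neg hba)
    rw [neg_sub_neg] at h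
    linarith
  · rw [signedRpow_of_nonneg hp0.ne' ha, signedRpow_of_nonpos hp0.ne' hb]
    have ha' : a ^ p ≤ (a - b) ^ p := rpow_le_rpow ha (by linarith) hp0.le
    have hb' : (-b) ^ p ≤ (a - b) ^ p := rpow_le_rpow (neg_nonneg.2 hb) (by linarith) hp0.le
    linarith

lemma holderWith_signedRpow (hp0 : 0 < p) (hp1 : p ≤ 1) :
    HolderWith 2 p.toNNReal (signedRpow p) := by
  refine HolderWith.of_dist_le fun a b => ?_
  wlog hba : b ≤ a generalizing a b
  · rw [dist_comm, dist_comm a]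
    exact this b a (le_of_not_ge hba)
  rw [Real.coe_toNNReal p hp0.le, Real.dist_eq, Real.dist_eq,
    abs_of_nonneg (sub_nonneg.2 (monotone_signedRpow hp0 hba)), abs_of_nonneg (sub_nonneg.2 hba)]
  exact_mod_cast signedRpow_sub_signedRpow_le hp0 hp1 hba

lemma hasDerivAt_abs_rpow_add_one (hp : 0 < p) (x : ℝ) :
    HasDerivAt (fun t => 1 / (p + 1) * |t| ^ (p + 1)) (signedRpow p x) x := by
  refine ((hasDerivAt_abs_rpow x (by linarith)).const_mul (1 / (p + 1))).congr_deriv ?_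
  rw [signedRpow, show p + 1 - 2 = p - 1 by ring]
  field_simp

end signedRpow

theorem bregman_le_diff_pow (α : ℝ) (hα0 : 0 < α) (hα1 : α < 1) :
    ∃ c : ℝ, 0 < c ∧ ∀ v w : ℝ,
      (1 / (α + 1)) * (|w| ^ (α + 1) - |v| ^ (α + 1)) +
          (|v| ^ (α - 1) * v) * (v - w) ≤
        c * |v - w| ^ (1 + α) := by
  refine ⟨2, two_pos, fun v w => ?_⟩
  have h := abs_sub_sub_mul_le_of_hasDerivAt_of_holderWith (hasDerivAt_abs_rpow_add_one hα0)
    (holderWith_signedRpow hα0 hα1.le) v w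
  rw [abs_sub_comm w v, Real.coe_toNNReal α hα0.le, NNReal.coe_ofNat] at h
  refine le_trans (le_of_eq ?_) ((le_abs_self _).trans h)
  rw [signedRpow]
  ring
end

section
/- For every α ≥ 1 there is a constant c = c(α) such that for all v, w ∈ ℝ: 𝔟_α[v,w] ≤ c·||v|^{α-1}v - |w|^{α-1}w|^{(α+1)/α}. -/
/-!
Write `φ v = |v| ^ (α - 1) * v`, the derivative of the convex function `|v| ^ (α + 1) / (α + 1)`.
Then `𝔟_α[v,w] + 𝔟_α[w,v] = (φ v - φ w) * (v - w)` and `𝔟_α[w,v] ≥ 0` by Young's inequality, so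
`𝔟_α[v,w] ≤ |φ v - φ w| * |v - w|`. The inverse of `φ` is `1/α`-Hölder,
`|v - w| ^ α ≤ 2 ^ (α - 1) * |φ v - φ w|` (superadditivity of `x ^ α` when `v`, `w` have the same
sign, the power-mean inequality otherwise), which gives the claim with `c = 2 ^ (1 - 1/α)`.
-/

open Real

noncomputable def signedPow (α v : ℝ) : ℝ := |v| ^ (α - 1) * v

/-- `bregman α v w` is `𝔟_α[v,w]`. -/
noncomputable def bregman (α v w : ℝ) : ℝ :=
  1 / (α + 1) * (|w| ^ (α + 1) - |v| ^ (α + 1)) + signedPow α v * (v - w)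

section SignedPow

variable {α v : ℝ}

lemma signedPow_neg (α v : ℝ) : signedPow α (-v) = -signedPow α v := by
  simp only [signedPow, abs_neg, mul_neg]

lemma signedPow_of_nonneg (hα : α ≠ 0) (hv : 0 ≤ v) : signedPow α v = v ^ α := by
  rw [signedPow, abs_of_nonneg hv, ← rpow_add_one' hv (by simpa using hα), sub_add_cancel]

lemma abs_signedPow (hα : α ≠ 0) (v : ℝ) : |signedPow α v| = |v| ^ α := by
  rw [signedPow, abs_mul, abs_of_nonneg (rpow_nonneg (abs_nonneg v) _),
    ← rpow_add_one' (abs_nonneg v) (by simpa using hα), sub_add_cancel]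

lemma signedPow_mul_self (hα : α + 1 ≠ 0) (v : ℝ) : signedPow α v * v = |v| ^ (α + 1) := by
  have h : α - 1 + 2 ≠ 0 := by contrapose! hα; linarith
  rw [signedPow, mul_assoc, ← abs_mul_abs_self, ← sq, ← rpow_two,
    ← rpow_add' (abs_nonneg v) h]
  ring_nf

end SignedPow

lemma sub_rpow_le_rpow_sub_rpow {p x y : ℝ} (hp : 1 ≤ p) (hy : 0 ≤ y) (hyx : y ≤ x) :
    (x - y) ^ p ≤ x ^ p - y ^ p := by
  have h := add_rpow_le_rpow_add (sub_nonneg.2 hyx) hy hp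
  rw [sub_add_cancel] at h
  linarith

lemma add_rpow_le_two_rpow_mul_add_rpow {p a b : ℝ} (hp : 1 ≤ p) (ha : 0 ≤ a) (hb : 0 ≤ b) :
    (a + b) ^ p ≤ 2 ^ (p - 1) * (a ^ p + b ^ p) := by
  lift a to NNReal using ha
  lift b to NNReal using hb
  exact_mod_cast NNReal.rpow_add_le_mul_rpow_add_rpow a b hp

section SignedPowHolder

variable {α v w : ℝ}

lemma rpow_sub_le_signedPow_sub_of_nonneg (hα : 1 ≤ α) (hw : 0 ≤ w) (hwv : w ≤ v) :
    (v - w) ^ α ≤ 2 ^ (α - 1) * (signedPow α v - signedPow α w) := by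
  have hα0 : α ≠ 0 := by positivity
  have h := sub_rpow_le_rpow_sub_rpow hα hw hwv
  rw [signedPow_of_nonneg hα0 (hw.trans hwv), signedPow_of_nonneg hα0 hw]
  have h2 : (1 : ℝ) ≤ 2 ^ (α - 1) := one_le_rpow (by norm_num) (by linarith)
  have hpos : 0 ≤ v ^ α - w ^ α := (rpow_nonneg (sub_nonneg.2 hwv) α).trans h
  exact h.trans (le_mul_of_one_le_left hpos h2)

lemma rpow_sub_le_signedPow_sub (hα : 1 ≤ α) (hwv : w ≤ v) :
    (v - w) ^ α ≤ 2 ^ (α - 1) * (signedPow α v - signedPow α w) := by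
  rcases le_total 0 w with hw | hw
  · exact rpow_sub_le_signedPow_sub_of_nonneg hα hw hwv
  rcases le_total v 0 with hv | hv
  · have h := rpow_sub_le_signedPow_sub_of_nonneg hα (neg_nonneg.2 hv) (neg_le_neg hwv)
    rwa [signedPow_neg, signedPow_neg, neg_sub_neg, neg_sub_neg] at h
  · have hα0 : α ≠ 0 := by positivity
    have h := add_rpow_le_two_rpow_mul_add_rpow hα hv (neg_nonneg.2 hw)
    rwa [← sub_eq_add_neg, ← signedPow_of_nonneg hα0 hv, ← signedPow_of_nonneg hα0 (neg_nonneg.2 hw),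
      signedPow_neg, ← sub_eq_add_neg] at h

lemma abs_sub_rpow_le (hα : 1 ≤ α) (v w : ℝ) :
    |v - w| ^ α ≤ 2 ^ (α - 1) * |signedPow α v - signedPow α w| := by
  wlog hwv : w ≤ v generalizing v w
  · rw [abs_sub_comm, abs_sub_comm (signedPow α v)]
    exact this w v (le_of_not_ge hwv)
  rw [abs_of_nonneg (sub_nonneg.2 hwv)]
  exact (rpow_sub_le_signedPow_sub hα hwv).trans (by gcongr; exact le_abs_self _)

lemma abs_sub_le_rpow_inv (hα : 1 ≤ α) (v w : ℝ) :
    |v - w| ≤ 2 ^ (1 - α⁻¹) * |signedPow α v - signedPow α w| ^ α⁻¹ := by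
  have hα0 : α ≠ 0 := by positivity
  calc |v - w| = (|v - w| ^ α) ^ α⁻¹ := (rpow_rpow_inv (abs_nonneg _) hα0).symm
    _ ≤ (2 ^ (α - 1) * |signedPow α v - signedPow α w|) ^ α⁻¹ := by
      gcongr
      exact abs_sub_rpow_le hα v w
    _ = 2 ^ (1 - α⁻¹) * |signedPow α v - signedPow α w| ^ α⁻¹ := by
      rw [mul_rpow (by positivity) (abs_nonneg _), ← rpow_mul zero_le_two]
      congr 2
      field_simp

end SignedPowHolder

section Bregman

variable {α : ℝ}

lemma signedPow_mul_le (hα : 0 < α) (v w : ℝ) :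
    signedPow α v * w ≤ (α * |v| ^ (α + 1) + |w| ^ (α + 1)) / (α + 1) := by
  have hconj : ((α + 1) / α).HolderConjugate (α + 1) :=
    ((holderConjugate_iff_eq_conjExponent (by linarith)).2 (by ring_nf)).symm
  have h := young_inequality (signedPow α v) w hconj
  rw [abs_signedPow hα.ne', ← rpow_mul (abs_nonneg v), mul_div_cancel₀ _ hα.ne'] at h
  exact h.trans_eq (by field_simp)

lemma bregman_nonneg (hα : 0 < α) (v w : ℝ) : 0 ≤ bregman α v w := by
  have hmul := signedPow_mul_self (α := α) (by linarith) v
  have hyoung := signedPow_mul_le hα v w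
  have hcancel : 1 / (α + 1) * (|w| ^ (α + 1) - |v| ^ (α + 1)) + |v| ^ (α + 1) -
      (α * |v| ^ (α + 1) + |w| ^ (α + 1)) / (α + 1) = 0 := by
    field_simp
    ring
  rw [bregman, mul_sub (signedPow α v), hmul]
  linarith

lemma bregman_add_bregman_swap (α v w : ℝ) :
    bregman α v w + bregman α w v = (signedPow α v - signedPow α w) * (v - w) := by
  simp only [bregman]
  ring

lemma bregman_le_abs_mul (hα : 0 < α) (v w : ℝ) :
    bregman α v w ≤ |signedPow α v - signedPow α w| * |v - w| := by
  rw [← abs_mul]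
  linarith [bregman_add_bregman_swap α v w, bregman_nonneg hα w v,
    le_abs_self ((signedPow α v - signedPow α w) * (v - w))]

end Bregman

theorem bregman_le_signed_power_diff_pow (α : ℝ) (hα : 1 ≤ α) :
    ∃ c : ℝ, 0 < c ∧ ∀ v w : ℝ,
      (1 / (α + 1)) * (|w| ^ (α + 1) - |v| ^ (α + 1)) +
          (|v| ^ (α - 1) * v) * (v - w) ≤
        c * |(|v| ^ (α - 1) * v) - (|w| ^ (α - 1) * w)| ^ ((α + 1) / α) := by
  have hα0 : 0 < α := by linarith
  refine ⟨2 ^ (1 - α⁻¹), by positivity, fun v w => ?_⟩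
  change bregman α v w ≤ _ * |signedPow α v - signedPow α w| ^ _
  set d := |signedPow α v - signedPow α w|
  calc bregman α v w ≤ d * |v - w| := bregman_le_abs_mul hα0 v w
    _ ≤ d * (2 ^ (1 - α⁻¹) * d ^ α⁻¹) := by gcongr; exact abs_sub_le_rpow_inv hα v w
    _ = 2 ^ (1 - α⁻¹) * d ^ ((α + 1) / α) := by
      rw [show (α + 1) / α = 1 + α⁻¹ by field_simp, rpow_one_add' (abs_nonneg _) (by positivity)]
      ring
end

section
/- Fix α ≥ 1 and ε ∈ (0,1), and let B_ε(u) := α∫₀^u (|s| + ε)^{α-1} ds. Then there is c = c(α) such that for all a, b ∈ ℝ: |b - a|^{α+1} ≤ c·(B_ε(b) - B_ε(a))·(b - a). -/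
/-!
For `a ≤ b` we have `B_ε(b) - B_ε(a) = α ∫_a^b (|s| + ε)^(α-1) ≥ α ∫_a^b |s|^(α-1)`, and the last
integral is at least `2^(1-α) (b - a)^α`: when `a` and `b` have the same sign this is the
superadditivity of `t ↦ t^α`, otherwise it is the power-mean inequality
`(-a + b)^α ≤ 2^(α-1) ((-a)^α + b^α)`. Multiplying by `b - a` gives the claim with `c = 2^(α-1)`,
uniformly in `ε`.
-/

open MeasureTheory intervalIntegral

lemma Real.rpow_add_le_two_rpow_mul_rpow_add_rpow {p a b : ℝ} (ha : 0 ≤ a) (hb : 0 ≤ b)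
    (hp : 1 ≤ p) : (a + b) ^ p ≤ 2 ^ (p - 1) * (a ^ p + b ^ p) := by
  lift a to NNReal using ha
  lift b to NNReal using hb
  exact_mod_cast NNReal.rpow_add_le_mul_rpow_add_rpow a b hp

section AbsRpow

variable {p q ε : ℝ}

lemma intervalIntegrable_abs_rpow (hq : 0 ≤ q) (a b : ℝ) :
    IntervalIntegrable (fun s => |s| ^ q) volume a b :=
  (continuous_abs.rpow_const fun _ => Or.inr hq).intervalIntegrable a b

lemma intervalIntegrable_abs_add_rpow (hq : 0 ≤ q) (ε a b : ℝ) :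
    IntervalIntegrable (fun s => (|s| + ε) ^ q) volume a b :=
  ((continuous_abs.add continuous_const).rpow_const fun _ => Or.inr hq).intervalIntegrable a b

lemma integral_abs_rpow_comp_neg (q a b : ℝ) :
    ∫ s in a..b, |s| ^ q = ∫ s in -b..-a, |s| ^ q := by
  simpa only [abs_neg] using integral_comp_neg (a := a) (b := b) fun s => |s| ^ q

lemma mul_integral_abs_rpow_sub_one_of_nonneg {a b : ℝ} (hp : 0 < p) (ha : 0 ≤ a)
    (hab : a ≤ b) : p * ∫ s in a..b, |s| ^ (p - 1) = b ^ p - a ^ p := by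
  have abs_eq : ∫ s in a..b, |s| ^ (p - 1) = ∫ s in a..b, s ^ (p - 1) :=
    integral_congr fun s hs => by
      rw [Set.uIcc_of_le hab] at hs
      simp only [abs_of_nonneg (ha.trans hs.1)]
  rw [abs_eq, integral_rpow (Or.inl (by linarith)), sub_add_cancel]
  field_simp

lemma sub_rpow_le_mul_integral_abs_rpow_sub_one_of_nonneg {a b : ℝ} (hp : 1 ≤ p) (ha : 0 ≤ a)
    (hab : a ≤ b) : (b - a) ^ p ≤ p * ∫ s in a..b, |s| ^ (p - 1) := by
  have superadd := Real.add_rpow_le_rpow_add (sub_nonneg.2 hab) ha hp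
  rw [sub_add_cancel] at superadd
  rw [mul_integral_abs_rpow_sub_one_of_nonneg (by linarith) ha hab]
  linarith

lemma sub_rpow_le_two_rpow_mul_integral_abs_rpow_sub_one {a b : ℝ} (hp : 1 ≤ p) (hab : a ≤ b) :
    (b - a) ^ p ≤ 2 ^ (p - 1) * (p * ∫ s in a..b, |s| ^ (p - 1)) := by
  have of_le (h : (b - a) ^ p ≤ p * ∫ s in a..b, |s| ^ (p - 1)) :
      (b - a) ^ p ≤ 2 ^ (p - 1) * (p * ∫ s in a..b, |s| ^ (p - 1)) :=
    h.trans (le_mul_of_one_le_left ((Real.rpow_nonneg (sub_nonneg.2 hab) p).trans h)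
      (Real.one_le_rpow one_le_two (by linarith)))
  rcases le_total 0 a with ha | ha
  · exact of_le (sub_rpow_le_mul_integral_abs_rpow_sub_one_of_nonneg hp ha hab)
  rcases le_total b 0 with hb | hb
  · refine of_le ?_
    rw [integral_abs_rpow_comp_neg, ← neg_sub_neg]
    exact sub_rpow_le_mul_integral_abs_rpow_sub_one_of_nonneg hp (neg_nonneg.2 hb) (neg_le_neg hab)
  have integrable := intervalIntegrable_abs_rpow (q := p - 1) (by linarith)
  rw [← integral_add_adjacent_intervals (integrable a 0) (integrable 0 b),
    integral_abs_rpow_comp_neg _ a, neg_zero, mul_add,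
    mul_integral_abs_rpow_sub_one_of_nonneg (by linarith) le_rfl (neg_nonneg.2 ha),
    mul_integral_abs_rpow_sub_one_of_nonneg (by linarith) le_rfl hb,
    Real.zero_rpow (by linarith), sub_zero, sub_zero, sub_eq_neg_add]
  exact Real.rpow_add_le_two_rpow_mul_rpow_add_rpow (neg_nonneg.2 ha) hb hp

lemma integral_abs_rpow_le_integral_abs_add_rpow {a b : ℝ} (hq : 0 ≤ q) (hε : 0 ≤ ε)
    (hab : a ≤ b) : ∫ s in a..b, |s| ^ q ≤ ∫ s in a..b, (|s| + ε) ^ q :=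
  integral_mono_on hab (intervalIntegrable_abs_rpow hq a b)
    (intervalIntegrable_abs_add_rpow hq ε a b)
    fun s _ => Real.rpow_le_rpow (abs_nonneg s) (le_add_of_nonneg_right hε) hq

lemma sub_rpow_le_two_rpow_mul_integral_abs_add_rpow_sub_one {a b : ℝ} (hp : 1 ≤ p)
    (hε : 0 ≤ ε) (hab : a ≤ b) :
    (b - a) ^ p ≤ 2 ^ (p - 1) * (p * ∫ s in a..b, (|s| + ε) ^ (p - 1)) := by
  refine (sub_rpow_le_two_rpow_mul_integral_abs_rpow_sub_one hp hab).trans ?_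
  gcongr
  exact integral_abs_rpow_le_integral_abs_add_rpow (by linarith) hε hab

end AbsRpow

theorem regularized_primitive_coercivity (α : ℝ) (hα : 1 ≤ α) :
    ∃ c : ℝ, 0 < c ∧ ∀ ε : ℝ, 0 < ε → ε < 1 → ∀ a b : ℝ,
      |b - a| ^ (α + 1) ≤
        c * (((α * ∫ s in (0:ℝ)..b, (|s| + ε) ^ (α - 1)) -
          (α * ∫ s in (0:ℝ)..a, (|s| + ε) ^ (α - 1))) * (b - a)) := by
  refine ⟨2 ^ (α - 1), by positivity, fun ε hε _ a b => ?_⟩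
  wlog hab : a ≤ b generalizing a b
  · convert this b a (le_of_not_ge hab) using 1
    · rw [abs_sub_comm]
    · ring
  have integrable := intervalIntegrable_abs_add_rpow (q := α - 1) (by linarith) ε
  have hba : 0 ≤ b - a := sub_nonneg.2 hab
  rw [← mul_sub, integral_interval_sub_left (integrable 0 b) (integrable 0 a),
    abs_of_nonneg hba, Real.rpow_add_one' hba (by linarith), ← mul_assoc]
  exact mul_le_mul_of_nonneg_right
    (sub_rpow_le_two_rpow_mul_integral_abs_add_rpow_sub_one hα hε.le hab) hba
end

section
/- Fix α ∈ (0,1), ε ∈ (0,1), and define Γ_ε(u) := α∫₀^u (|s| + ε)^{α-1}s ds. Then |Γ_ε(u) - (α/(α+1))|u|^{α+1}| ≤ c(α)·(ε^{α+1} + ε^α·|u|) for all u ∈ ℝ. -/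
open intervalIntegral Real

lemma rpow_sub_one_mul_self {x α : ℝ} (hx : 0 < x) : x ^ (α - 1) * x = x ^ α := by
  rw [← Real.rpow_add_one hx.ne' (α - 1)]
  ring_nf

lemma key_bound (α ε : ℝ) (hα0 : 0 < α) (hα1 : α < 1) (hε : 0 < ε) (u : ℝ) (hu : 0 ≤ u) :
    |(α * ∫ s in (0:ℝ)..u, (|s| + ε) ^ (α - 1) * s) - (α / (α + 1)) * u ^ (α + 1)| ≤
      α * (ε ^ α * u) := by
  have hα1' : (0:ℝ) < α + 1 := by linarith
  have h1 : (∫ s in (0:ℝ)..u, (|s| + ε) ^ (α - 1) * s)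
      = ∫ s in (0:ℝ)..u, (s + ε) ^ (α - 1) * s := by
    apply intervalIntegral.integral_congr
    intro s hs
    rw [Set.uIcc_of_le hu] at hs
    show (|s| + ε) ^ (α - 1) * s = (s + ε) ^ (α - 1) * s
    rw [abs_of_nonneg hs.1]
  have hint1 : IntervalIntegrable (fun s => (s + ε) ^ (α - 1) * s) MeasureTheory.volume 0 u := by
    apply ContinuousOn.intervalIntegrable
    apply ContinuousOn.mul _ continuousOn_id
    apply ContinuousOn.rpow_const (continuousOn_id.add continuousOn_const)
    intro x hx
    rw [Set.uIcc_of_le hu] at hx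
    exact Or.inl (by simpa using by nlinarith [hx.1] : (x + ε) ≠ 0)
  have hint2 : IntervalIntegrable (fun s : ℝ => s ^ α) MeasureTheory.volume 0 u :=
    intervalIntegral.intervalIntegrable_rpow' (by linarith)
  have h2 : (∫ s in (0:ℝ)..u, s ^ α) = u ^ (α + 1) / (α + 1) := by
    rw [integral_rpow (Or.inl (by linarith))]
    rw [Real.zero_rpow (by positivity)]
    ring
  have h3 : |∫ s in (0:ℝ)..u, ((s + ε) ^ (α - 1) * s - s ^ α)| ≤ ε ^ α * |u - 0| := by
    rw [← Real.norm_eq_abs]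
    apply intervalIntegral.norm_integral_le_of_norm_le_const
    intro x hx
    rw [Set.uIoc_of_le hu] at hx
    have hx0 : 0 < x := hx.1
    have hxε : 0 < x + ε := by linarith
    have hA : (x + ε) ^ (α - 1) ≤ x ^ (α - 1) :=
      Real.rpow_le_rpow_of_nonpos hx0 (by linarith) (by linarith)
    have hB : (x + ε) ^ (α - 1) * x ≤ x ^ α := by
      rw [← rpow_sub_one_mul_self hx0]
      exact mul_le_mul_of_nonneg_right hA hx0.le
    have hC : x ^ α ≤ (x + ε) ^ α := Real.rpow_le_rpow hx0.le (by linarith) hα0.le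
    have hD : (x + ε) ^ (α - 1) ≤ ε ^ (α - 1) :=
      Real.rpow_le_rpow_of_nonpos hε (by linarith) (by linarith)
    have hE : (x + ε) ^ (α - 1) * (x + ε) = (x + ε) ^ α := rpow_sub_one_mul_self hxε
    have hF : ε ^ (α - 1) * ε = ε ^ α := rpow_sub_one_mul_self hε
    rw [Real.norm_eq_abs, abs_sub_comm, abs_of_nonneg (by linarith)]
    -- x^α - (x+ε)^(α-1)*x = ε*(x+ε)^(α-1) - ((x+ε)^α - x^α) ≤ ε^(α-1)*ε = ε^α
    nlinarith [mul_le_mul_of_nonneg_right hD hε.le]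
  have hsub : (∫ s in (0:ℝ)..u, ((s + ε) ^ (α - 1) * s - s ^ α))
      = (∫ s in (0:ℝ)..u, (s + ε) ^ (α - 1) * s) - ∫ s in (0:ℝ)..u, s ^ α :=
    intervalIntegral.integral_sub hint1 hint2
  rw [h1]
  have : (α * ∫ s in (0:ℝ)..u, (s + ε) ^ (α - 1) * s) - α / (α + 1) * u ^ (α + 1)
      = α * (∫ s in (0:ℝ)..u, ((s + ε) ^ (α - 1) * s - s ^ α)) := by
    rw [hsub, h2]; ring
  rw [this, abs_mul, abs_of_pos hα0]
  rw [sub_zero, abs_of_nonneg hu] at h3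
  exact mul_le_mul_of_nonneg_left h3 hα0.le

theorem regularized_energy_bound_alpha_lt_one (α : ℝ) (hα0 : 0 < α) (hα1 : α < 1) :
    ∃ c : ℝ, 0 < c ∧ ∀ ε : ℝ, 0 < ε → ε < 1 → ∀ u : ℝ,
      |(α * ∫ s in (0:ℝ)..u, (|s| + ε) ^ (α - 1) * s) - (α / (α + 1)) * |u| ^ (α + 1)| ≤
        c * (ε ^ (α + 1) + ε ^ α * |u|) := by
  refine ⟨α, hα0, fun ε hε hε1 u => ?_⟩
  have hεα : (0:ℝ) ≤ ε ^ (α + 1) := by positivity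
  rcases le_or_gt 0 u with hu | hu
  · rw [abs_of_nonneg hu]
    have := key_bound α ε hα0 hα1 hε u hu
    nlinarith [this]
  · have hvu : (0:ℝ) ≤ -u := by linarith
    have hflip : (∫ s in (0:ℝ)..u, (|s| + ε) ^ (α - 1) * s)
        = ∫ s in (0:ℝ)..(-u), (|s| + ε) ^ (α - 1) * s := by
      have h := intervalIntegral.integral_comp_neg (a := (0:ℝ)) (b := -u)
        (fun s => (|s| + ε) ^ (α - 1) * s)
      simp only [abs_neg, neg_zero, neg_neg, mul_neg] at h
      rw [intervalIntegral.integral_neg] at h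
      rw [intervalIntegral.integral_symm 0 u] at h
      linarith
    rw [abs_of_neg hu, hflip]
    have := key_bound α ε hα0 hα1 hε (-u) hvu
    nlinarith [this]
end
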